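/- arXiv:2312.00458 — 2 statements merged into one kernel-verified Lean document; each statement's English description precedes it below -/
import Mathlib

section
/- For every ℓ ∈ ℕ, every language in the dot-depth class B_ℓ over Σ is ADT_{2ℓ+2}-definable. -/
namespace ADTpaper

/-- Propositional formulas over a set `P` of propositional variables. -/
inductive PropForm (P : Type) : Type where
  | var : P → PropForm P
  | tru : PropForm P
  | fls : PropForm P
  | neg : PropForm P → PropForm P
  | conj : PropForm P → PropForm P → PropForm P
  | disj : PropForm P → PropForm P → PropForm P

/-- A valuation is a subset of `P` (an element of the alphabet `Σ = 2^P`). -/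
abbrev Val (P : Type) : Type := Set P

/-- A trace is a finite word over the alphabet `Σ = 2^P`. -/
abbrev Trace (P : Type) : Type := List (Val P)

/-- Satisfaction of a propositional formula by a valuation. -/
def PropForm.eval {P : Type} (v : Val P) : PropForm P → Prop
  | .var p => p ∈ v
  | .tru => True
  | .fls => False
  | .neg φ => ¬ PropForm.eval v φ
  | .conj φ ψ => PropForm.eval v φ ∧ PropForm.eval v ψ
  | .disj φ ψ => PropForm.eval v φ ∨ PropForm.eval v ψ

/-- Size of a propositional formula. -/
def PropForm.size {P : Type} : PropForm P → ℕ
  | .var _ => 1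
  | .tru => 1
  | .fls => 1
  | .neg φ => PropForm.size φ + 1
  | .conj φ ψ => PropForm.size φ + PropForm.size ψ + 1
  | .disj φ ψ => PropForm.size φ + PropForm.size ψ + 1

/-- Attack-defense trees over `P` (operators taken binary, w.l.o.g. by associativity). -/
inductive ADT (P : Type) : Type where
  | eps  : ADT P
  | leaf : PropForm P → ADT P
  | orA  : ADT P → ADT P → ADT P
  | sand : ADT P → ADT P → ADT P
  | andA : ADT P → ADT P → ADT P
  | cm   : ADT P → ADT P → ADT P

/-- Trace semantics of an adt: a language over the alphabet `Σ = 2^P`. -/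
def sem {P : Type} : ADT P → Language (Val P)
  | .eps => 1
  | .leaf γ => {w | ∃ w' v, w = w' ++ [v] ∧ PropForm.eval v γ}
  | .orA t₁ t₂ => sem t₁ ⊔ sem t₂
  | .sand t₁ t₂ => sem t₁ * sem t₂
  | .andA t₁ t₂ => (sem t₁ * ⊤ ⊓ sem t₂) ⊔ (sem t₂ * ⊤ ⊓ sem t₁)
  | .cm t₁ t₂ => sem t₁ \ sem t₂

/-- Countermeasure-depth of an adt. -/
def cd {P : Type} : ADT P → ℕ
  | .eps => 0
  | .leaf _ => 0
  | .orA t₁ t₂ => max (cd t₁) (cd t₂)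
  | .sand t₁ t₂ => max (cd t₁) (cd t₂)
  | .andA t₁ t₂ => max (cd t₁) (cd t₂)
  | .cm t₁ t₂ => max (cd t₁) (cd t₂ + 1)

/-- The size of an adt: the sum of the sizes of its leaves, the leaf `ε` having size 1. -/
def ADT.size {P : Type} : ADT P → ℕ
  | .eps => 1
  | .leaf γ => PropForm.size γ
  | .orA t₁ t₂ => ADT.size t₁ + ADT.size t₂
  | .sand t₁ t₂ => ADT.size t₁ + ADT.size t₂
  | .andA t₁ t₂ => ADT.size t₁ + ADT.size t₂
  | .cm t₁ t₂ => ADT.size t₁ + ADT.size t₂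


/-- Concatenations `L₁ ⬝ … ⬝ Lₙ` (`n ≥ 1`) of languages from the class `C`. -/
inductive ConcatOf {α : Type} (C : Language α → Prop) : Language α → Prop where
  | base {L : Language α} : C L → ConcatOf C L
  | mul {L₁ L₂ : Language α} : ConcatOf C L₁ → ConcatOf C L₂ → ConcatOf C (L₁ * L₂)

/-- Boolean combinations of languages from the class `C`. -/
inductive BoolComb {α : Type} (C : Language α → Prop) : Language α → Prop where
  | base {L : Language α} : C L → BoolComb C L
  | union {L₁ L₂ : Language α} : BoolComb C L₁ → BoolComb C L₂ → BoolComb C (L₁ ⊔ L₂)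
  | inter {L₁ L₂ : Language α} : BoolComb C L₁ → BoolComb C L₂ → BoolComb C (L₁ ⊓ L₂)
  | compl {L : Language α} : BoolComb C L → BoolComb C Lᶜ

/-- The dot-depth hierarchy: `B₀` is the class of finite or cofinite languages, and
`B_{ℓ+1}` is the class of Boolean combinations of concatenations of languages of `B_ℓ`. -/
def DotDepth {α : Type} : ℕ → Language α → Prop
  | 0, L => Set.Finite (L : Set (List α)) ∨ Set.Finite ((Lᶜ : Language α) : Set (List α))
  | ℓ + 1, L => BoolComb (ConcatOf (DotDepth ℓ)) L

/-!
Union and concatenation are native ADT operators that do not raise the countermeasure-depth,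
while a countermeasure `C(⊤, t)` yields the complement at the cost of one level. A singleton
`{[a]}` is the set of nonempty traces ending in `a` minus those of length at least two, so
finite languages have depth `1` and cofinite ones depth `2`. A Boolean combination of
depth-`k` languages is a union of intersections of literals `L`, `Lᶜ`; each such
intersection is the complement of a union of depth-`(k+1)` languages, hence of depth `k+2`.
-/

section Definable

variable {P : Type}

/-- The `ADT_k`-definable languages. -/
def Definable (k : ℕ) : Set (Language (Val P)) :=
  {L | ∃ t : ADT P, cd t ≤ k ∧ sem t = L}

theorem definable_mono {k m : ℕ} (h : k ≤ m) : Definable (P := P) k ⊆ Definable m :=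
  fun _ ⟨t, ht, hL⟩ => ⟨t, ht.trans h, hL⟩

theorem mem_sem_leaf_tru {w : Trace P} : w ∈ sem (.leaf (.tru : PropForm P)) ↔ w ≠ [] := by
  constructor
  · rintro ⟨w', v, rfl, -⟩
    simp
  · intro hw
    obtain ⟨w', v, rfl⟩ := (List.eq_nil_or_concat' w).resolve_left hw
    exact ⟨w', v, rfl, trivial⟩

theorem bot_mem_definable : (⊥ : Language (Val P)) ∈ Definable 0 :=
  ⟨.leaf .fls, le_rfl, Set.eq_empty_of_forall_notMem fun _ ⟨_, _, _, h⟩ => h⟩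

theorem top_mem_definable : (⊤ : Language (Val P)) ∈ Definable 0 := by
  refine ⟨.orA .eps (.leaf .tru), le_rfl, Set.eq_univ_of_forall fun w => ?_⟩
  by_cases hw : w = []
  · exact Or.inl hw
  · exact Or.inr (mem_sem_leaf_tru.2 hw)

theorem supClosed_definable (k : ℕ) : SupClosed (Definable (P := P) k) := by
  rintro _ ⟨t₁, h₁, rfl⟩ _ ⟨t₂, h₂, rfl⟩
  exact ⟨.orA t₁ t₂, max_le h₁ h₂, rfl⟩

theorem mul_mem_definable {k : ℕ} {L M : Language (Val P)} (hL : L ∈ Definable k)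
    (hM : M ∈ Definable k) : L * M ∈ Definable k := by
  obtain ⟨t₁, h₁, rfl⟩ := hL
  obtain ⟨t₂, h₂, rfl⟩ := hM
  exact ⟨.sand t₁ t₂, max_le h₁ h₂, rfl⟩

theorem compl_mem_definable {k : ℕ} {L : Language (Val P)} (hL : L ∈ Definable k) :
    Lᶜ ∈ Definable (k + 1) := by
  obtain ⟨u, hu, hu_top⟩ := top_mem_definable (P := P)
  obtain ⟨t, ht, rfl⟩ := hL
  refine ⟨.cm u t, max_le (hu.trans (Nat.zero_le _)) (Nat.succ_le_succ ht), ?_⟩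
  change sem u \ sem t = _
  rw [hu_top, top_sdiff]

theorem concatOf_mem_definable {k : ℕ} {C : Language (Val P) → Prop}
    (hC : ∀ {L}, C L → L ∈ Definable k) {L : Language (Val P)} (hL : ConcatOf C L) :
    L ∈ Definable k := by
  induction hL with
  | base h => exact hC h
  | mul _ _ ih₁ ih₂ => exact mul_mem_definable ih₁ ih₂

theorem boolComb_mem_definable {k : ℕ} {C : Language (Val P) → Prop}
    (hC : ∀ {L}, C L → L ∈ Definable k) {L : Language (Val P)} (hL : BoolComb C L) :
    L ∈ Definable (k + 2) := by
  set F := supClosure (compl '' Definable (P := P) (k + 1))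
  have hF_sup : SupClosed F := supClosed_supClosure
  have hF_inf : InfClosed F := by
    refine InfClosed.supClosure ?_
    rintro _ ⟨X, hX, rfl⟩ _ ⟨Y, hY, rfl⟩
    exact ⟨X ⊔ Y, supClosed_definable _ hX hY, compl_sup⟩
  have hF : F ⊆ Definable (k + 2) := by
    refine supClosure_min ?_ (supClosed_definable _)
    rintro _ ⟨X, hX, rfl⟩
    exact compl_mem_definable hX
  suffices L ∈ F ∧ Lᶜ ∈ F from hF this.1
  induction hL with
  | @base L h =>
    refine ⟨subset_supClosure ⟨Lᶜ, compl_mem_definable (hC h), compl_compl L⟩,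
      subset_supClosure ⟨L, definable_mono (Nat.le_succ k) (hC h), rfl⟩⟩
  | union _ _ ih₁ ih₂ => exact ⟨hF_sup ih₁.1 ih₂.1, by rw [compl_sup]; exact hF_inf ih₁.2 ih₂.2⟩
  | inter _ _ ih₁ ih₂ => exact ⟨hF_inf ih₁.1 ih₂.1, by rw [compl_inf]; exact hF_sup ih₁.2 ih₂.2⟩
  | compl _ ih => exact ⟨ih.2, by rw [compl_compl]; exact ih.1⟩

end Definable

section Finite

variable {P : Type}

open Classical in
noncomputable def charFormulaOn (a : Val P) (ps : List P) : PropForm P :=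
  ps.foldr (fun p φ => .conj (if p ∈ a then .var p else .neg (.var p)) φ) .tru

open Classical in
theorem eval_charFormulaOn {a v : Val P} {ps : List P} :
    (charFormulaOn a ps).eval v ↔ ∀ p ∈ ps, (p ∈ v ↔ p ∈ a) := by
  induction ps with
  | nil => simp [charFormulaOn, PropForm.eval]
  | cons p ps ih =>
    have hlit : PropForm.eval v (if p ∈ a then .var p else .neg (.var p)) ↔ (p ∈ v ↔ p ∈ a) := by
      by_cases hp : p ∈ a <;> simp [hp, PropForm.eval]
    simp only [charFormulaOn, List.foldr_cons, PropForm.eval, List.forall_mem_cons, hlit] at ih ⊢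
    rw [ih]

noncomputable def charFormula [Fintype P] (a : Val P) : PropForm P :=
  charFormulaOn a Finset.univ.toList

theorem eval_charFormula [Fintype P] {a v : Val P} : (charFormula a).eval v ↔ v = a := by
  rw [charFormula, eval_charFormulaOn, Set.ext_iff]
  simp

theorem singleton_letter_mem_definable [Fintype P] (a : Val P) :
    ({[a]} : Language (Val P)) ∈ Definable 1 := by
  refine ⟨.cm (.leaf (charFormula a)) (.sand (.leaf .tru) (.leaf .tru)), le_rfl, ?_⟩
  refine Language.ext fun w => ?_
  change (∃ w' v, w = w' ++ [v] ∧ (charFormula a).eval v) ∧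
    w ∉ (sem (.leaf .tru) * sem (.leaf .tru) : Language (Val P)) ↔ w = [a]
  simp only [eval_charFormula, Language.mem_mul, mem_sem_leaf_tru]
  constructor
  · rintro ⟨⟨w', v, rfl, rfl⟩, hlong⟩
    by_contra hw'
    exact hlong ⟨w', by simpa using hw', [v], List.cons_ne_nil _ _, rfl⟩
  · rintro rfl
    refine ⟨⟨[], a, rfl, rfl⟩, ?_⟩
    rintro ⟨x, hx, y, hy, hxy⟩
    rcases List.append_eq_singleton_iff.1 hxy with ⟨rfl, -⟩ | ⟨-, rfl⟩
    exacts [hx rfl, hy rfl]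

theorem singleton_mem_definable [Fintype P] (w : Trace P) :
    ({w} : Language (Val P)) ∈ Definable 1 := by
  induction w with
  | nil => exact ⟨.eps, zero_le_one, rfl⟩
  | cons a w ih =>
    have hmul : ({[a]} * {w} : Language (Val P)) = {a :: w} := Set.image2_singleton
    exact hmul ▸ mul_mem_definable (singleton_letter_mem_definable a) ih

theorem finite_mem_definable [Fintype P] {L : Language (Val P)}
    (hL : (L : Set (Trace P)).Finite) : L ∈ Definable 1 := by
  induction L, hL using Set.Finite.induction_on with
  | empty => exact definable_mono zero_le_one bot_mem_definable
  | @insert w S _ _ ih =>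
    rw [Set.insert_eq]
    exact supClosed_definable 1 (singleton_mem_definable w) ih

end Finite

/-- Every language of dot-depth `ℓ` is ADT_{2ℓ+2}-definable. -/
theorem dotdepth_to_ADT {P : Type} [Fintype P] (ℓ : ℕ) (L : Language (Val P))
    (hL : DotDepth ℓ L) :
    ∃ t : ADT P, cd t ≤ 2 * ℓ + 2 ∧ sem t = L := by
  induction ℓ generalizing L with
  | zero =>
    rcases hL with hfin | hcofin
    · exact definable_mono (by norm_num) (finite_mem_definable hfin)
    · have h := compl_mem_definable (finite_mem_definable hcofin)
      rwa [compl_compl] at h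
  | succ ℓ ih => exact boolComb_mem_definable (concatOf_mem_definable (ih _)) hL

end ADTpaper
end

section
/- The language (ab)⁺ = {ab, abab, ababab, …} over Σ is ADT₂-definable but not ADT₁-definable. -/
/-!
Upper bound: `(ab)⁺` is the set of words that end with `b`, do not start with `b` and contain
neither `aa` nor `bb`. A single letter costs one countermeasure (the words ending in it, minus
the words of length at least two), so the three excluded sets are `ADT₁`, and removing them from
the words ending in `b` gives depth `2`.

Lower bound: a language of countermeasure-depth `0` is closed under inserting a word anywhere
before a nonempty suffix. Fix a word `w` and a prefix `x` of `w`. Every `ADT₁` language `L` then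
has the property that if `u wⁿ v ∈ L` for infinitely many `n`, then `u wⁱ x wʲ v ∈ L` for all
large `i` and `j`. Union, intersection and concatenation preserve it (for concatenation, by
pigeonhole on where the cut falls), and so does removing an insertion-closed language `L₂`: if
`u wⁱ x wʲ v` were in `L₂`, completing `x` to `w` and then inserting further powers of `w` would put
`u wⁿ v` in `L₂` for all large `n`. For `w = ab` and `x = a` this puts a word of odd length
into `(ab)⁺`.
-/

namespace ADTpaper

/-- With `Prop = {p}` (here `P = Unit`), the letter `a := {p}` of `Σ = 2^{p}`. -/
def aU : Val Unit := Set.univ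

/-- With `Prop = {p}` (here `P = Unit`), the letter `b := ∅` of `Σ = 2^{p}`. -/
def bU : Val Unit := ∅

open Classical in
/-- `μ(w)`: the number of occurrences of `a = {p}` minus the number of occurrences of
`b = ∅` in the word `w` (every letter of `Σ = 2^{p}` is `a` or `b`). -/
noncomputable def muU : List (Val Unit) → ℤ
  | [] => 0
  | v :: w => (if () ∈ v then 1 else -1) + muU w

/-- The language `(ab)⁺ = {ab, abab, ababab, …}` over `Σ = 2^{p}`. -/
def abPlus : Language (Val Unit) :=
  {w | ∃ n : ℕ, 0 < n ∧ w = (List.replicate n [aU, bU]).flatten}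

open Filter

section Words

variable {α : Type*}

instance : Pow (List α) ℕ := ⟨fun w n => (List.replicate n w).flatten⟩

namespace List

theorem pow_def (w : List α) (n : ℕ) : w ^ n = (List.replicate n w).flatten := rfl

@[simp] theorem pow_zero (w : List α) : w ^ 0 = [] := rfl

theorem pow_add (w : List α) (m n : ℕ) : w ^ (m + n) = w ^ m ++ w ^ n := by
  simp only [pow_def, List.replicate_add, List.flatten_append]

@[simp] theorem pow_one (w : List α) : w ^ 1 = w := by
  simp [pow_def]

theorem pow_succ (w : List α) (n : ℕ) : w ^ (n + 1) = w ^ n ++ w := by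
  rw [pow_add, pow_one]

theorem pow_succ' (w : List α) (n : ℕ) : w ^ (n + 1) = w ++ w ^ n := by
  rw [Nat.add_comm, pow_add, pow_one]

@[simp] theorem length_pow (w : List α) (n : ℕ) : (w ^ n).length = n * w.length := by
  simp [pow_def]

theorem pow_ne_nil {w : List α} {n : ℕ} (hw : w ≠ []) (hn : n ≠ 0) : w ^ n ≠ [] := by
  simp [← List.length_pos_iff, Nat.pos_of_ne_zero hn, List.length_pos_iff.mpr hw]

theorem append_eq_pow {p q w : List α} {n : ℕ} (hn : n ≠ 0) (h : p ++ q = w ^ n) :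
    ∃ w₁ w₂, w₁ ++ w₂ = w ∧ ∃ k m, n = k + 1 + m ∧ p = w ^ k ++ w₁ ∧ q = w₂ ++ w ^ m := by
  induction n generalizing p q with
  | zero => exact absurd rfl hn
  | succ n ih =>
    rw [pow_succ'] at h
    rcases List.append_eq_append_iff.mp h with ⟨a, rfl, rfl⟩ | ⟨b, rfl, hb⟩
    · exact ⟨p, a, rfl, 0, n, by omega, by simp, rfl⟩
    · rcases eq_or_ne n 0 with rfl | hn'
      · obtain ⟨rfl, rfl⟩ := List.append_eq_nil_iff.mp hb.symm
        exact ⟨w, [], by simp, 0, 0, rfl, by simp, by simp⟩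
      · obtain ⟨w₁, w₂, hw, k, m, rfl, rfl, rfl⟩ := ih hn' hb.symm
        exact ⟨w₁, w₂, hw, k + 1, m, by omega, by simp [pow_succ'], rfl⟩

theorem append_eq_append_pow_append {p q u w v : List α} {n : ℕ} (hn : n ≠ 0)
    (h : p ++ q = u ++ w ^ n ++ v) :
    (∃ u₂, p ++ u₂ = u ∧ q = u₂ ++ w ^ n ++ v) ∨
    (∃ w₁ w₂, w₁ ++ w₂ = w ∧ ∃ k m, n = k + 1 + m ∧ p = u ++ w ^ k ++ w₁ ∧
      q = w₂ ++ w ^ m ++ v) ∨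
    (∃ v₁, v₁ ++ q = v ∧ p = u ++ w ^ n ++ v₁) := by
  rw [List.append_assoc] at h
  rcases List.append_eq_append_iff.mp h with ⟨a, rfl, rfl⟩ | ⟨b, rfl, hb⟩
  · exact Or.inl ⟨a, rfl, by simp⟩
  · rcases List.append_eq_append_iff.mp hb with ⟨c, rfl, rfl⟩ | ⟨d, hd, rfl⟩
    · exact Or.inr (Or.inr ⟨c, rfl, by simp⟩)
    · obtain ⟨w₁, w₂, hw, k, m, hkm, rfl, rfl⟩ := append_eq_pow hn hd.symm
      exact Or.inr (Or.inl ⟨w₁, w₂, hw, k, m, hkm, by simp, by simp⟩)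

end List

theorem frequently_exists_append_eq {ι : Type*} {l : Filter ι} {u : List α}
    {P : List α → List α → ι → Prop} (h : ∃ᶠ n in l, ∃ u₁ u₂, u₁ ++ u₂ = u ∧ P u₁ u₂ n) :
    ∃ u₁ u₂, u₁ ++ u₂ = u ∧ ∃ᶠ n in l, P u₁ u₂ n := by
  have hfin : {s : List α × List α | s.1 ++ s.2 = u}.Finite :=
    (u.inits.finite_toSet.prod u.tails.finite_toSet).subset fun s hs =>
      ⟨(List.mem_inits _ _).mpr ⟨s.2, hs⟩, (List.mem_tails _ _).mpr ⟨s.1, hs⟩⟩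
  obtain ⟨⟨u₁, u₂⟩, hu, hP⟩ := (hfin.frequently_exists (p := fun s n => P s.1 s.2 n)).mp
    (h.mono fun _ ⟨u₁, u₂, hu, hP⟩ => ⟨(u₁, u₂), hu, hP⟩)
  exact ⟨u₁, u₂, hu, hP⟩

end Words

theorem frequently_add_split {A B : ℕ → Prop}
    (h : ∃ᶠ n in atTop, ∃ k m, n = k + 1 + m ∧ A k ∧ B m) :
    ((∃ᶠ k in atTop, A k) ∧ ∃ m, B m) ∨ ((∃ k, A k) ∧ ∃ᶠ m in atTop, B m) := by
  obtain ⟨-, k₀, m₀, -, hk₀, hm₀⟩ := h.exists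
  by_cases hA : ∃ᶠ k in atTop, A k
  · exact Or.inl ⟨hA, m₀, hm₀⟩
  · obtain ⟨K, hK⟩ := eventually_atTop.mp (not_frequently.mp hA)
    refine Or.inr ⟨⟨k₀, hk₀⟩, frequently_atTop.mpr fun M => ?_⟩
    obtain ⟨-, hn, k, m, rfl, hk, hm⟩ := frequently_atTop.mp h (K + M)
    have : k < K := not_le.mp fun hKk => hK k hKk hk
    exact ⟨m, by omega, hm⟩

theorem eventually_atTop_of_shift {R : ℕ × ℕ → Prop} (a b : ℕ)
    (h : ∀ᶠ ij : ℕ × ℕ in atTop, R (a + ij.1, ij.2 + b)) : ∀ᶠ ij : ℕ × ℕ in atTop, R ij := by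
  rw [eventually_atTop_prod_self'] at h ⊢
  obtain ⟨N, hN⟩ := h
  refine ⟨N + a + b, fun i hi j hj => ?_⟩
  simpa [show a + (i - a) = i by omega, show j - b + b = j by omega]
    using hN (i - a) (by omega) (j - b) (by omega)

section Languages

variable {α : Type*} {L L₁ L₂ : Language α} {w x : List α}

def InsertClosed (L : Language α) : Prop :=
  ∀ u x v : List α, v ≠ [] → u ++ v ∈ L → u ++ x ++ v ∈ L

namespace InsertClosed

theorem one : InsertClosed (1 : Language α) := fun _ _ _ hv h =>
  absurd (List.append_eq_nil_iff.mp ((Language.mem_one _).mp h)).2 hv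

theorem top : InsertClosed (⊤ : Language α) := fun _ _ _ _ _ => trivial

theorem sup (h₁ : InsertClosed L₁) (h₂ : InsertClosed L₂) : InsertClosed (L₁ ⊔ L₂) :=
  fun u x v hv h => h.imp (h₁ u x v hv) (h₂ u x v hv)

theorem inf (h₁ : InsertClosed L₁) (h₂ : InsertClosed L₂) : InsertClosed (L₁ ⊓ L₂) :=
  fun u x v hv h => ⟨h₁ u x v hv h.1, h₂ u x v hv h.2⟩

theorem mul (h₁ : InsertClosed L₁) (h₂ : InsertClosed L₂) : InsertClosed (L₁ * L₂) := by
  intro u x v hv h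
  obtain ⟨p, hp, q, hq, hpq⟩ := Language.mem_mul.mp h
  rcases List.append_eq_append_iff.mp hpq with ⟨a, rfl, rfl⟩ | ⟨b, rfl, rfl⟩
  · exact Language.mem_mul.mpr ⟨p, hp, a ++ x ++ v, h₂ a x v hv hq, by simp⟩
  · rcases eq_or_ne b [] with rfl | hb
    · exact Language.mem_mul.mpr
        ⟨u, by simpa using hp, x ++ q, h₂ [] x q (by simpa using hv) hq, by simp⟩
    · exact Language.mem_mul.mpr ⟨u ++ x ++ b, h₁ u x b hb hp, q, hq, by simp⟩

theorem pow_mem (hL : InsertClosed L) {u v : List α} {m n : ℕ} (h : u ++ w ^ m ++ v ∈ L)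
    (hne : w ^ m ++ v ≠ []) (hmn : m ≤ n) : u ++ w ^ n ++ v ∈ L := by
  obtain ⟨d, rfl⟩ := Nat.exists_eq_add_of_le' hmn
  simpa [List.pow_add] using hL u (w ^ d) (w ^ m ++ v) hne (by simpa using h)

end InsertClosed

theorem insertClosed_endsWith (S : α → Prop) :
    InsertClosed {w : List α | ∃ w' c, w = w' ++ [c] ∧ S c} := by
  rintro u x v hv ⟨w', c, hw, hc⟩
  obtain ⟨v', c', rfl⟩ := (List.eq_nil_or_concat' v).resolve_left hv
  rw [← List.append_assoc] at hw
  obtain rfl : c' = c := by simpa using (List.append_inj' hw rfl).2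
  exact ⟨u ++ x ++ v', c', by simp, hc⟩

def PumpsWith (w x : List α) (L : Language α) : Prop :=
  ∀ u v : List α, (∃ᶠ n in atTop, u ++ w ^ n ++ v ∈ L) →
    ∀ᶠ ij : ℕ × ℕ in atTop, u ++ w ^ ij.1 ++ x ++ w ^ ij.2 ++ v ∈ L

theorem InsertClosed.pumpsWith (hL : InsertClosed L) (hw : w ≠ []) : PumpsWith w x L := by
  intro u v hfreq
  obtain ⟨n, hn, hmem⟩ := frequently_atTop.mp hfreq 1
  obtain ⟨n, rfl⟩ := Nat.exists_eq_add_of_le' hn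
  filter_upwards [eventually_ge_atTop (n, 1)] with ⟨i, j⟩ ⟨hi, hj⟩
  obtain ⟨d, rfl⟩ := Nat.exists_eq_add_of_le hi
  obtain ⟨j, rfl⟩ := Nat.exists_eq_add_of_le' hj
  simpa [List.pow_add, List.pow_succ] using
    hL (u ++ w ^ n) (w ^ d ++ x ++ w ^ j) (w ++ v) (by simp [hw])
      (by simpa [List.pow_succ] using hmem)

namespace PumpsWith

theorem top : PumpsWith w x (⊤ : Language α) :=
  fun _ _ _ => Eventually.of_forall fun _ => trivial

theorem sup (h₁ : PumpsWith w x L₁) (h₂ : PumpsWith w x L₂) : PumpsWith w x (L₁ ⊔ L₂) := by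
  intro u v hfreq
  rcases frequently_or_distrib.mp hfreq with h | h
  · exact (h₁ u v h).mono fun _ => Or.inl
  · exact (h₂ u v h).mono fun _ => Or.inr

theorem inf (h₁ : PumpsWith w x L₁) (h₂ : PumpsWith w x L₂) : PumpsWith w x (L₁ ⊓ L₂) :=
  fun u v hfreq =>
    (h₁ u v (hfreq.mono fun _ => And.left)).and (h₂ u v (hfreq.mono fun _ => And.right))

theorem sdiff (h₁ : PumpsWith w x L₁) (h₂ : InsertClosed L₂) (hx : x <+: w) (hw : w ≠ []) :
    PumpsWith w x (L₁ \ L₂) := by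
  intro u v hfreq
  obtain ⟨y, hxy⟩ := hx
  filter_upwards [h₁ u v (hfreq.mono fun _ => And.left), eventually_ge_atTop (0, 1)]
    with ⟨i, j⟩ hmem ⟨_, hj⟩
  refine ⟨hmem, fun hmem₂ : u ++ w ^ i ++ x ++ w ^ j ++ v ∈ L₂ => ?_⟩
  have hne : w ^ j ++ v ≠ [] := by simp [List.pow_ne_nil hw (by omega : j ≠ 0)]
  have hins : u ++ w ^ (i + 1 + j) ++ v ∈ L₂ := by
    simpa [List.pow_add, ← hxy] using
      h₂ (u ++ w ^ i ++ x) y (w ^ j ++ v) hne (by simpa using hmem₂)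
  obtain ⟨n, hn, hmem'⟩ := frequently_atTop.mp hfreq (i + 1 + j)
  exact hmem'.2 (h₂.pow_mem hins (by simp [List.pow_ne_nil hw (by omega : i + 1 + j ≠ 0)]) hn)

end PumpsWith

theorem frequently_split_of_frequently_mem_mul {u v : List α}
    (h : ∃ᶠ n in atTop, u ++ w ^ n ++ v ∈ L₁ * L₂) : ∃ᶠ n in atTop,
      (∃ u₁ u₂, u₁ ++ u₂ = u ∧ u₁ ∈ L₁ ∧ u₂ ++ w ^ n ++ v ∈ L₂) ∨
      (∃ w₁ w₂, w₁ ++ w₂ = w ∧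
        ∃ k m, n = k + 1 + m ∧ u ++ w ^ k ++ w₁ ∈ L₁ ∧ w₂ ++ w ^ m ++ v ∈ L₂) ∨
      (∃ v₁ v₂, v₁ ++ v₂ = v ∧ u ++ w ^ n ++ v₁ ∈ L₁ ∧ v₂ ∈ L₂) := by
  refine (h.and_eventually (eventually_ne_atTop 0)).mono fun n ⟨hn, hn0⟩ => ?_
  obtain ⟨p, hp, q, hq, hpq⟩ := Language.mem_mul.mp hn
  rcases List.append_eq_append_pow_append hn0 hpq with
    ⟨u₂, rfl, rfl⟩ | ⟨w₁, w₂, hw, k, m, hkm, rfl, rfl⟩ | ⟨v₁, rfl, rfl⟩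
  · exact Or.inl ⟨p, u₂, rfl, hp, hq⟩
  · exact Or.inr (Or.inl ⟨w₁, w₂, hw, k, m, hkm, hp, hq⟩)
  · exact Or.inr (Or.inr ⟨v₁, q, rfl, hp, hq⟩)

theorem PumpsWith.mul (h₁ : PumpsWith w x L₁) (h₂ : PumpsWith w x L₂) :
    PumpsWith w x (L₁ * L₂) := by
  intro u v hfreq
  rcases frequently_or_distrib.mp (frequently_split_of_frequently_mem_mul hfreq) with hu | hwv
  · obtain ⟨u₁, u₂, rfl, hfreq₂⟩ := frequently_exists_append_eq hu
    obtain ⟨-, hu₁, -⟩ := hfreq₂.exists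
    exact (h₂ u₂ v (hfreq₂.mono fun _ => And.right)).mono fun _ hmem =>
      Language.mem_mul.mpr ⟨u₁, hu₁, _, hmem, by simp⟩
  rcases frequently_or_distrib.mp hwv with hw | hv
  · obtain ⟨w₁, w₂, rfl, hfreq'⟩ := frequently_exists_append_eq hw
    rcases frequently_add_split hfreq' with ⟨hfreq₁, m, hm⟩ | ⟨⟨k, hk⟩, hfreq₂⟩
    · refine eventually_atTop_of_shift 0 (m + 1) ((h₁ u w₁ hfreq₁).mono fun _ hmem => ?_)
      exact Language.mem_mul.mpr ⟨_, hmem, _, hm, by simp [List.pow_add, List.pow_succ']⟩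
    · refine eventually_atTop_of_shift (k + 1) 0 ((h₂ w₂ v hfreq₂).mono fun _ hmem => ?_)
      exact Language.mem_mul.mpr ⟨_, hk, _, hmem, by simp [List.pow_add]⟩
  · obtain ⟨v₁, v₂, rfl, hfreq₁⟩ := frequently_exists_append_eq hv
    obtain ⟨-, -, hv₂⟩ := hfreq₁.exists
    exact (h₁ u v₁ (hfreq₁.mono fun _ => And.left)).mono fun _ hmem =>
      Language.mem_mul.mpr ⟨_, hmem, v₂, hv₂, by simp⟩

end Languages

section Trees

variable {P : Type}

theorem insertClosed_sem_of_cd_eq_zero : ∀ {t : ADT P}, cd t = 0 → InsertClosed (sem t)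
  | .eps, _ => InsertClosed.one
  | .leaf γ, _ => insertClosed_endsWith (PropForm.eval · γ)
  | .orA t₁ t₂, h => by
    simp only [cd, Nat.max_eq_zero_iff] at h
    exact (insertClosed_sem_of_cd_eq_zero h.1).sup (insertClosed_sem_of_cd_eq_zero h.2)
  | .sand t₁ t₂, h => by
    simp only [cd, Nat.max_eq_zero_iff] at h
    exact (insertClosed_sem_of_cd_eq_zero h.1).mul (insertClosed_sem_of_cd_eq_zero h.2)
  | .andA t₁ t₂, h => by
    simp only [cd, Nat.max_eq_zero_iff] at h
    have h₁ := insertClosed_sem_of_cd_eq_zero h.1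
    have h₂ := insertClosed_sem_of_cd_eq_zero h.2
    exact ((h₁.mul .top).inf h₂).sup ((h₂.mul .top).inf h₁)
  | .cm _ _, h => by simp [cd] at h

theorem pumpsWith_sem {w x : List (Val P)} (hx : x <+: w) (hw : w ≠ []) :
    ∀ {t : ADT P}, cd t ≤ 1 → PumpsWith w x (sem t)
  | .eps, _ => (insertClosed_sem_of_cd_eq_zero (t := .eps) rfl).pumpsWith hw
  | .leaf γ, _ => (insertClosed_sem_of_cd_eq_zero (t := .leaf γ) rfl).pumpsWith hw
  | .orA t₁ t₂, h => by
    simp only [cd, max_le_iff] at h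
    exact (pumpsWith_sem hx hw h.1).sup (pumpsWith_sem hx hw h.2)
  | .sand t₁ t₂, h => by
    simp only [cd, max_le_iff] at h
    exact (pumpsWith_sem hx hw h.1).mul (pumpsWith_sem hx hw h.2)
  | .andA t₁ t₂, h => by
    simp only [cd, max_le_iff] at h
    have h₁ := pumpsWith_sem hx hw h.1
    have h₂ := pumpsWith_sem hx hw h.2
    exact ((h₁.mul .top).inf h₂).sup ((h₂.mul .top).inf h₁)
  | .cm t₁ t₂, h => by
    simp only [cd, max_le_iff] at h
    exact (pumpsWith_sem hx hw h.1).sdiff (insertClosed_sem_of_cd_eq_zero (by omega)) hx hw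

namespace ADT

def nonempty : ADT P := .leaf .tru

def star : ADT P := .orA .eps nonempty

def letter (γ : PropForm P) : ADT P := .cm (.leaf γ) (.sand nonempty nonempty)

def startingWith (t : ADT P) : ADT P := .sand t star

def containing (t : ADT P) : ADT P := .sand star (startingWith t)

end ADT

variable {w : List (Val P)}

theorem mem_sem_leaf {γ : PropForm P} : w ∈ sem (.leaf γ) ↔ ∃ w' c, w = w' ++ [c] ∧ γ.eval c :=
  Iff.rfl

theorem mem_sem_orA {t₁ t₂ : ADT P} : w ∈ sem (.orA t₁ t₂) ↔ w ∈ sem t₁ ∨ w ∈ sem t₂ := Iff.rfl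

theorem mem_sem_cm {t₁ t₂ : ADT P} : w ∈ sem (.cm t₁ t₂) ↔ w ∈ sem t₁ ∧ w ∉ sem t₂ := Iff.rfl

theorem mem_sem_nonempty : w ∈ sem (ADT.nonempty : ADT P) ↔ w ≠ [] := by
  constructor
  · rintro ⟨w', c, rfl, -⟩
    simp
  · intro hw
    obtain ⟨w', c, rfl⟩ := (List.eq_nil_or_concat' w).resolve_left hw
    exact ⟨w', c, rfl, trivial⟩

theorem mem_sem_star (w : List (Val P)) : w ∈ sem (ADT.star : ADT P) := by
  rcases eq_or_ne w [] with rfl | hw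
  · exact Or.inl rfl
  · exact Or.inr (mem_sem_nonempty.mpr hw)

theorem mem_sem_letter {γ : PropForm P} : w ∈ sem (ADT.letter γ) ↔ ∃ c, w = [c] ∧ γ.eval c := by
  have hlong : w ∈ sem (.sand ADT.nonempty ADT.nonempty : ADT P) ↔ 2 ≤ w.length := by
    simp only [sem, Language.mem_mul, mem_sem_nonempty]
    constructor
    · rintro ⟨p, hp, q, hq, rfl⟩
      simp [← List.length_pos_iff] at hp hq ⊢
      omega
    · intro h
      obtain ⟨c, d, w', rfl⟩ : ∃ c d w', w = c :: d :: w' := by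
        match w, h with
        | c :: d :: w', _ => exact ⟨c, d, w', rfl⟩
      exact ⟨[c], by simp, d :: w', by simp, rfl⟩
  rw [ADT.letter, mem_sem_cm, mem_sem_leaf, hlong]
  constructor
  · rintro ⟨⟨w', c, rfl, hc⟩, hlen⟩
    obtain rfl : w' = [] := by simpa using hlen
    exact ⟨c, rfl, hc⟩
  · rintro ⟨c, rfl, hc⟩
    exact ⟨⟨[], c, rfl, hc⟩, by simp⟩

theorem mem_sem_startingWith {t : ADT P} :
    w ∈ sem (ADT.startingWith t) ↔ ∃ s ∈ sem t, s <+: w := by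
  simp [ADT.startingWith, sem, Language.mem_mul, mem_sem_star, List.IsPrefix]

theorem mem_sem_containing {t : ADT P} : w ∈ sem (ADT.containing t) ↔ ∃ s ∈ sem t, s <:+: w := by
  simp only [ADT.containing, sem, Language.mem_mul, mem_sem_startingWith, mem_sem_star,
    true_and, List.IsInfix, List.IsPrefix]
  constructor
  · rintro ⟨p, _, ⟨s, hs, q, rfl⟩, rfl⟩
    exact ⟨s, hs, p, q, by simp⟩
  · rintro ⟨s, hs, p, q, rfl⟩
    exact ⟨p, _, ⟨s, hs, q, rfl⟩, by simp⟩

end Trees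

theorem aU_ne_bU : aU ≠ bU := fun h => (h ▸ Set.mem_univ () : () ∈ bU)

theorem eq_aU_or_eq_bU (c : Val Unit) : c = aU ∨ c = bU := by
  by_cases h : () ∈ c
  · exact Or.inl (Set.eq_univ_of_forall fun _ => h)
  · exact Or.inr (Set.eq_empty_of_forall_notMem fun _ => h)

def aForm : PropForm Unit := .var ()

def bForm : PropForm Unit := .neg aForm

theorem eval_aForm {c : Val Unit} : aForm.eval c ↔ c = aU := by
  rcases eq_aU_or_eq_bU c with rfl | rfl
  · exact iff_of_true (Set.mem_univ ()) rfl
  · exact iff_of_false id aU_ne_bU.symm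

theorem eval_bForm {c : Val Unit} : bForm.eval c ↔ c = bU := by
  rcases eq_aU_or_eq_bU c with rfl | rfl
  · simp [bForm, PropForm.eval, eval_aForm, aU_ne_bU]
  · simp [bForm, PropForm.eval, eval_aForm, aU_ne_bU.symm]

theorem mem_sem_sand_letter {γ δ : PropForm Unit} {c d : Val Unit}
    (hγ : ∀ e, γ.eval e ↔ e = c) (hδ : ∀ e, δ.eval e ↔ e = d) {w : List (Val Unit)} :
    w ∈ sem (.sand (.letter γ) (.letter δ)) ↔ w = [c, d] := by
  simp [sem, Language.mem_mul, mem_sem_letter, hγ, hδ, eq_comm]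

def abTree : ADT Unit :=
  .cm (.leaf bForm)
    (.orA
      (.orA (.startingWith (.letter bForm))
        (.containing (.sand (.letter aForm) (.letter aForm))))
      (.containing (.sand (.letter bForm) (.letter bForm))))

theorem cd_abTree : cd abTree = 2 := rfl

theorem mem_sem_abTree {w : List (Val Unit)} : w ∈ sem abTree ↔
    [bU] <:+ w ∧ ¬ [bU] <+: w ∧ ¬ [aU, aU] <:+: w ∧ ¬ [bU, bU] <:+: w := by
  simp only [abTree, mem_sem_cm, mem_sem_orA, mem_sem_leaf, mem_sem_startingWith,
    mem_sem_containing, mem_sem_letter, eval_bForm,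
    mem_sem_sand_letter (fun _ => eval_aForm) (fun _ => eval_aForm),
    mem_sem_sand_letter (fun _ => eval_bForm) (fun _ => eval_bForm)]
  simp [List.IsSuffix, eq_comm, or_assoc]

theorem ab_pow_avoids (n : ℕ) :
    ¬ [bU] <+: [aU, bU] ^ n ∧ ¬ [aU, aU] <:+: [aU, bU] ^ n ∧ ¬ [bU, bU] <:+: [aU, bU] ^ n := by
  induction n with
  | zero => simp
  | succ n ih =>
    simp [List.pow_succ', List.infix_cons_iff, aU_ne_bU, aU_ne_bU.symm, ih]

theorem exists_eq_ab_pow : ∀ {w : List (Val Unit)}, [bU] <:+ w → ¬ [bU] <+: w →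
    ¬ [aU, aU] <:+: w → ¬ [bU, bU] <:+: w → ∃ n, w = [aU, bU] ^ (n + 1)
  | [], hsuf, _, _, _ => absurd hsuf (by simp)
  | [c], hsuf, hpre, _, _ =>
    (hpre ((List.suffix_cons_iff.mp hsuf).resolve_right (by simp) ▸ List.prefix_refl _)).elim
  | c :: d :: rest, hsuf, hpre, haa, hbb => by
    obtain rfl : c = aU := (eq_aU_or_eq_bU c).resolve_right fun h => hpre (by simp [h])
    obtain rfl : d = bU :=
      (eq_aU_or_eq_bU d).resolve_left fun h => haa (by simp [h, List.infix_cons_iff])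
    rcases eq_or_ne rest [] with rfl | hrest
    · exact ⟨0, rfl⟩
    have hsuf' : [bU] <:+ rest := by simpa [List.suffix_cons_iff, hrest] using hsuf
    have hpre' : ¬ [bU] <+: rest := fun h =>
      hbb (List.infix_cons (List.cons_prefix_cons.mpr ⟨rfl, h⟩).isInfix)
    obtain ⟨n, rfl⟩ := exists_eq_ab_pow hsuf' hpre'
      (fun h => haa (List.infix_cons (List.infix_cons h)))
      (fun h => hbb (List.infix_cons (List.infix_cons h)))
    exact ⟨n + 1, by rw [List.pow_succ' _ (n + 1)]; rfl⟩

theorem mem_abPlus_iff {w : List (Val Unit)} : w ∈ abPlus ↔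
    [bU] <:+ w ∧ ¬ [bU] <+: w ∧ ¬ [aU, aU] <:+: w ∧ ¬ [bU, bU] <:+: w := by
  constructor
  · rintro ⟨n, hn, rfl⟩
    obtain ⟨n, rfl⟩ := Nat.exists_eq_add_of_le' hn
    rw [← List.pow_def]
    exact ⟨⟨[aU, bU] ^ n ++ [aU], by simp [List.pow_succ]⟩, ab_pow_avoids (n + 1)⟩
  · rintro ⟨hsuf, hpre, haa, hbb⟩
    obtain ⟨n, rfl⟩ := exists_eq_ab_pow hsuf hpre haa hbb
    exact ⟨n + 1, n.succ_pos, rfl⟩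

theorem sem_abTree : sem abTree = abPlus :=
  Language.ext fun _ => mem_sem_abTree.trans mem_abPlus_iff.symm

theorem even_length_of_mem_abPlus {w : List (Val Unit)} (h : w ∈ abPlus) : Even w.length := by
  obtain ⟨n, -, rfl⟩ := h
  exact ⟨n, by simp [← List.pow_def]; omega⟩

/-- `(ab)⁺` is ADT₂-definable but not ADT₁-definable. -/
theorem abPlus_ADT2_not_ADT1 :
    (∃ t : ADT Unit, cd t ≤ 2 ∧ sem t = abPlus) ∧
      ¬ (∃ t : ADT Unit, cd t ≤ 1 ∧ sem t = abPlus) := by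
  refine ⟨⟨abTree, cd_abTree.le, sem_abTree⟩, ?_⟩
  rintro ⟨t, ht, hsem⟩
  have hfreq : ∃ᶠ n in atTop, [] ++ [aU, bU] ^ n ++ [] ∈ sem t := by
    rw [hsem]
    exact (eventually_gt_atTop 0).frequently.mono fun n hn => ⟨n, hn, by simp; rfl⟩
  obtain ⟨⟨i, j⟩, hmem⟩ :=
    (pumpsWith_sem (x := [aU]) ⟨[bU], rfl⟩ (List.cons_ne_nil _ _) ht [] [] hfreq).exists
  have heven := even_length_of_mem_abPlus (hsem ▸ hmem)
  simp [Nat.even_add, parity_simps] at heven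

end ADTpaper
end
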